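/- arXiv:2212.01484 — 8 statements merged into one kernel-verified Lean document; each statement's English description precedes it below -/
import Mathlib

section
/- Let $\mathcal{A}$ be an almost disjoint family on $\omega$ (an infinite collection of infinite subsets of $\omega$ with pairwise finite intersections) and let $C:\omega\to[\omega]^{<\omega}\setminus\{\emptyset\}$ be a fin sequence (i.e., the sets $C(n)$ are nonempty, finite, and pairwise disjoint). Suppose there exists an infinite set $I\subseteq\omega$ such that $\bigcup_{n\in I}C(n)$ belongs to the ideal $\mathcal{I}(\mathcal{A})$ generated by $\mathcal{A}$ together with the finite sets (i.e., $\bigcup_{n\in I}C(n)\subseteq^*\bigcup\mathcal{B}$ for some finite $\mathcal{B}\subseteq\mathcal{A}$). Then there exists an infinite $J\subseteq I$ such that the collection $\{\{n\in J: C(n)\cap a\neq\emptyset\}: a\in\mathcal{A}\}\setminus[J]^{<\omega}$ is centered, i.e., every finite nonempty subcollection of the infinite sets among $\{n\in J: C(n)\cap a\neq\emptyset\}$ ($a\in\mathcal{A}$) has infinite intersection. -/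
open Set

/-- An almost disjoint family on ω: an infinite set of infinite subsets of ℕ
with pairwise finite intersections. -/
def ADFamily (A : Set (Set ℕ)) : Prop :=
  A.Infinite ∧ (∀ a ∈ A, a.Infinite) ∧
    ∀ a ∈ A, ∀ b ∈ A, a ≠ b → (a ∩ b).Finite

/-- A fin sequence: pairwise disjoint nonempty finite subsets of ℕ. -/
def FinSeq (C : ℕ → Finset ℕ) : Prop :=
  (∀ n, (C n).Nonempty) ∧ ∀ n m, n ≠ m → Disjoint (C n) (C m)

/-- A collection of sets is centered iff every finite nonempty subcollection
has infinite intersection. -/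
def Centered (𝒞 : Set (Set ℕ)) : Prop :=
  ∀ F : Finset (Set ℕ), ↑F ⊆ 𝒞 → F.Nonempty → (⋂₀ (F : Set (Set ℕ))).Infinite

/-- The collection {{n ∈ I : a ∩ C(n) ≠ ∅} : a ∈ A} \ [I]^{<ω}. -/
def traceFamily (A : Set (Set ℕ)) (C : ℕ → Finset ℕ) (I : Set ℕ) : Set (Set ℕ) :=
  {S | (∃ a ∈ A, S = {n ∈ I | ((C n : Set ℕ) ∩ a).Nonempty}) ∧ S.Infinite}

/-- A is fin-intersecting. -/
def FinIntersecting (A : Set (Set ℕ)) : Prop :=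
  ∀ C : ℕ → Finset ℕ, FinSeq C →
    ∃ I : Set ℕ, I.Infinite ∧ Centered (traceFamily A C I)

/-- Maximal almost disjoint family. -/
def MADFamily (A : Set (Set ℕ)) : Prop :=
  ADFamily A ∧ ∀ X : Set ℕ, X.Infinite → ∃ a ∈ A, (X ∩ a).Infinite

/-- X ∈ I⁺(A): X is not almost covered by finitely many members of A. -/
def IPlus (A : Set (Set ℕ)) (X : Set ℕ) : Prop :=
  ∀ B : Finset (Set ℕ), ↑B ⊆ A → (X \ ⋃₀ (B : Set (Set ℕ))).Infinite

/-- The splitting number 𝔰. -/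
noncomputable def splittingNumber : Cardinal :=
  sInf {c | ∃ S : Set (Set ℕ), c = Cardinal.mk S ∧ (∀ s ∈ S, s.Infinite) ∧
    ∀ X : Set ℕ, X.Infinite → ∃ s ∈ S, (X ∩ s).Infinite ∧ (X \ s).Infinite}

private lemma fin_fiber (C : ℕ → Finset ℕ)
    (hC : ∀ n m, n ≠ m → Disjoint (C n) (C m))
    (K : Set ℕ) (hK : K.Finite) :
    {n | ∃ x, x ∈ C n ∧ x ∈ K}.Finite := by
  classical
  set S := {n | ∃ x, x ∈ C n ∧ x ∈ K} with hS
  let g : ℕ → ℕ := fun n => if h : ∃ x, x ∈ C n ∧ x ∈ K then h.choose else 0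
  have hgmem : ∀ n ∈ S, g n ∈ C n ∧ g n ∈ K := by
    intro n hn
    have hn' : ∃ x, x ∈ C n ∧ x ∈ K := hn
    simp only [g]
    rw [dif_pos hn']
    exact hn'.choose_spec
  apply Set.Finite.of_finite_image (f := g)
  · refine hK.subset ?_
    rintro _ ⟨n, hn, rfl⟩
    exact (hgmem n hn).2
  · intro n hn m hm hnm
    by_contra hne
    exact Finset.disjoint_left.mp (hC n m hne) (hgmem n hn).1
      (hnm ▸ (hgmem m hm).1)

theorem stmt0 (A : Set (Set ℕ)) (C : ℕ → Finset ℕ)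
    (hA : ADFamily A) (hC : FinSeq C) (I : Set ℕ) (hI : I.Infinite)
    (B : Finset (Set ℕ)) (hB : ↑B ⊆ A)
    (hcov : ((⋃ n ∈ I, (C n : Set ℕ)) \ ⋃₀ (B : Set (Set ℕ))).Finite) :
    ∃ J ⊆ I, J.Infinite ∧ Centered (traceFamily A C J) := by
  classical
  set U : Set ℕ := ⋃₀ (B : Set (Set ℕ)) with hU
  set D : Set ℕ := (⋃ n ∈ I, (C n : Set ℕ)) \ U with hD
  -- almost all n ∈ I have C n ⊆ U
  have hbad : {n ∈ I | ¬ (C n : Set ℕ) ⊆ U}.Finite := by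
    refine (fin_fiber C hC.2 D hcov).subset ?_
    intro n hn
    obtain ⟨hnI, hns⟩ := hn
    rw [Set.not_subset] at hns
    obtain ⟨x, hx1, hx2⟩ := hns
    exact ⟨x, hx1, ⟨Set.mem_biUnion hnI hx1, hx2⟩⟩
  set I' : Set ℕ := {n ∈ I | (C n : Set ℕ) ⊆ U} with hI'def
  have hI' : I'.Infinite := by
    refine (hI.diff hbad).mono ?_
    intro n hn
    exact ⟨hn.1, by by_contra h; exact hn.2 ⟨hn.1, h⟩⟩
  -- pigeonhole on colors
  let f : ℕ → Finset (Set ℕ) := fun n => B.filter (fun b => ∃ x ∈ C n, x ∈ b)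
  have hpig : ∃ B₀, {n ∈ I' | f n = B₀}.Infinite := by
    by_contra h
    push_neg at h
    have hsub : I' ⊆ ⋃ s ∈ (↑B.powerset : Set (Finset (Set ℕ))), {n ∈ I' | f n = s} := by
      intro n hn
      exact Set.mem_biUnion
        (Finset.mem_coe.mpr (Finset.mem_powerset.mpr (Finset.filter_subset _ B)))
        ⟨hn, rfl⟩
    have : I'.Finite := Set.Finite.subset
      (Set.Finite.biUnion (B.powerset.finite_toSet) (fun s _ => h s)) hsub
    exact hI' this
  obtain ⟨B₀, hJinf⟩ := hpig
  set J : Set ℕ := {n ∈ I' | f n = B₀} with hJdef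
  have hJI : J ⊆ I := fun n hn => hn.1.1
  refine ⟨J, hJI, hJinf, ?_⟩
  -- every set in the trace family equals J
  have key : ∀ S ∈ traceFamily A C J, S = J := by
    rintro S ⟨⟨a, haA, rfl⟩, hSinf⟩
    have haB₀ : a ∈ B₀ := by
      by_contra haB₀
      -- then the trace is finite, contradiction
      -- K = a ∩ ⋃₀ B₀ is finite
      obtain ⟨n₀, hn₀⟩ := hJinf.nonempty
      have hB₀B : B₀ ⊆ B := by
        rw [← hn₀.2]; exact Finset.filter_subset _ B
      have hKfin : (a ∩ ⋃₀ (B₀ : Set (Set ℕ))).Finite := by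
        rw [Set.sUnion_eq_biUnion, Set.inter_iUnion₂]
        refine Set.Finite.biUnion (B₀.finite_toSet) (fun b hb => ?_)
        refine hA.2.2 a haA b (hB (hB₀B hb)) (fun hab => haB₀ ?_)
        rwa [hab]
      refine hSinf ?_
      refine (fin_fiber C hC.2 _ hKfin).subset ?_
      intro n hn
      obtain ⟨hnJ, x, hx1, hx2⟩ := hn
      have hnI' : n ∈ I' := hnJ.1
      have hxU : x ∈ U := hnI'.2 hx1
      obtain ⟨b, hbB, hxb⟩ := hxU
      have hbB₀ : b ∈ B₀ := by
        rw [← hnJ.2]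
        simp only [f, Finset.mem_filter]
        exact ⟨hbB, x, hx1, hxb⟩
      exact ⟨x, hx1, hx2, Set.mem_sUnion.mpr ⟨b, hbB₀, hxb⟩⟩
    ext n
    constructor
    · exact fun hn => hn.1
    · intro hn
      refine ⟨hn, ?_⟩
      have : a ∈ f n := hn.2 ▸ haB₀
      simp only [f, Finset.mem_filter] at this
      obtain ⟨_, x, hx1, hx2⟩ := this
      exact ⟨x, hx1, hx2⟩
  intro F hF hFne
  obtain ⟨S, hS⟩ := hFne
  have hFJ : ∀ T ∈ F, T = J := fun T hT => key T (hF hT)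
  have : (⋂₀ (F : Set (Set ℕ))) = J := by
    apply subset_antisymm
    · intro x hx
      exact (hFJ S hS) ▸ hx S hS
    · intro x hx T hT
      rw [hFJ T hT]; exact hx
  rw [this]
  exact hJinf
end

section
/- Let $\mathcal{A}$ be an almost disjoint family on $\omega$ and let $C$ be a fin sequence. Let $k$ be the least natural number for which there exist $\mathcal{B}\subseteq\mathcal{A}$ of size $k$ and an infinite $J\subseteq\omega$ with $\bigcup_{n\in J}C(n)\subseteq^*\bigcup\mathcal{B}$, witnessed by such $\mathcal{B}$ and $J$. Then: (1) for every $a\in\mathcal{B}$, the set $\{n\in J: C(n)\cap a=\emptyset\}$ is finite; and (2) for every $a\in\mathcal{A}\setminus\mathcal{B}$, the set $\{n\in J: C(n)\cap a\neq\emptyset\}$ is finite. -/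
open Set

theorem stmt1 (A : Set (Set ℕ)) (C : ℕ → Finset ℕ) (hA : ADFamily A) (hC : FinSeq C)
    (B : Finset (Set ℕ)) (hB : ↑B ⊆ A) (J : Set ℕ) (hJ : J.Infinite)
    (hcov : ((⋃ n ∈ J, (C n : Set ℕ)) \ ⋃₀ (B : Set (Set ℕ))).Finite)
    (hmin : ∀ B' : Finset (Set ℕ), ↑B' ⊆ A → ∀ J' : Set ℕ, J'.Infinite →
      ((⋃ n ∈ J', (C n : Set ℕ)) \ ⋃₀ (B' : Set (Set ℕ))).Finite → B.card ≤ B'.card) :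
    (∀ a ∈ B, {n ∈ J | (C n : Set ℕ) ∩ a = ∅}.Finite) ∧
    (∀ a ∈ A, a ∉ B → {n ∈ J | ((C n : Set ℕ) ∩ a).Nonempty}.Finite) := by
  classical
  constructor
  · intro a ha
    by_contra hinf
    replace hinf : Set.Infinite _ := hinf
    have hsub : ((⋃ n ∈ {n ∈ J | (C n : Set ℕ) ∩ a = ∅}, (C n : Set ℕ)) \
        ⋃₀ ((B.erase a : Finset (Set ℕ)) : Set (Set ℕ))) ⊆
        ((⋃ n ∈ J, (C n : Set ℕ)) \ ⋃₀ (B : Set (Set ℕ))) := by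
      rintro x ⟨hx1, hx2⟩
      simp only [Set.mem_iUnion] at hx1
      obtain ⟨n, ⟨hnJ, hna⟩, hxn⟩ := hx1
      refine ⟨Set.mem_iUnion₂.mpr ⟨n, hnJ, hxn⟩, ?_⟩
      rintro ⟨b, hb, hxb⟩
      rcases eq_or_ne b a with rfl | hne
      · exact absurd (Set.mem_inter hxn hxb) (by rw [hna]; exact id)
      · exact hx2 ⟨b, by simp [hne, hb], hxb⟩
    have hmin' := hmin (B.erase a) (fun b hb => hB (Finset.erase_subset a B hb)) _ hinf
      (hcov.subset hsub)
    have := Finset.card_erase_of_mem ha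
    have hpos : 0 < B.card := Finset.card_pos.mpr ⟨a, ha⟩
    omega
  · intro a haA haB
    by_contra hinf
    replace hinf : Set.Infinite _ := hinf
    set S : Set ℕ := {n ∈ J | ((C n : Set ℕ) ∩ a).Nonempty} with hS
    classical
    set g : ℕ → ℕ := fun n => if h : ((C n : Set ℕ) ∩ a).Nonempty then h.choose else 0 with hg
    have hgmem : ∀ n ∈ S, g n ∈ (C n : Set ℕ) ∩ a := by
      intro n hn
      simp only [hg]
      rw [dif_pos hn.2]
      exact hn.2.choose_spec
    have hginj : Set.InjOn g S := by
      intro n hn m hm heq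
      by_contra hne
      have h1 := (hgmem n hn).1
      have h2 := (hgmem m hm).1
      rw [heq] at h1
      exact (Finset.disjoint_left.mp (hC.2 n m hne)) (by exact_mod_cast h1) (by exact_mod_cast h2)
    set X : Set ℕ := g '' S with hX
    have hXinf : X.Infinite := hinf.image hginj
    have hXa : X ⊆ a := by rintro x ⟨n, hn, rfl⟩; exact (hgmem n hn).2
    have hXdiff : (X \ ⋃₀ (B : Set (Set ℕ))).Finite := by
      refine hcov.subset ?_
      rintro x ⟨⟨n, hn, rfl⟩, hx2⟩
      exact ⟨Set.mem_iUnion₂.mpr ⟨n, hn.1, (hgmem n hn).1⟩, hx2⟩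
    have hXcap : (X ∩ ⋃₀ (B : Set (Set ℕ))).Infinite := by
      intro hfin
      exact hXinf ((hfin.union hXdiff).subset (fun x hx => by
        by_cases h : x ∈ ⋃₀ (B : Set (Set ℕ))
        · exact Or.inl ⟨hx, h⟩
        · exact Or.inr ⟨hx, h⟩))
    have : ∃ b ∈ B, (X ∩ b).Infinite := by
      by_contra hall
      push_neg at hall
      have : (X ∩ ⋃₀ (B : Set (Set ℕ))).Finite := by
        have : X ∩ ⋃₀ (B : Set (Set ℕ)) ⊆ ⋃ b ∈ (B : Set (Set ℕ)), X ∩ b := by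
          rintro x ⟨hx, b, hb, hxb⟩
          exact Set.mem_iUnion₂.mpr ⟨b, hb, hx, hxb⟩
        exact (Set.Finite.biUnion B.finite_toSet (fun b hb => hall b hb)).subset this
      exact hXcap this
    obtain ⟨b, hb, hXb⟩ := this
    have hne : a ≠ b := fun h => haB (h ▸ hb)
    have := hA.2.2 a haA b (hB hb) hne
    exact hXb (this.subset (fun x hx => ⟨hXa hx.1, hx.2⟩))
end

section
/- Every almost disjoint family on $\omega$ of cardinality strictly less than the splitting number $\mathfrak{s}$ is fin-intersecting: for every fin sequence $C$ there exists an infinite $I\subseteq\omega$ such that the collection $\{\{n\in I: a\cap C(n)\neq\emptyset\}: a\in\mathcal{A}\}\setminus[I]^{<\omega}$ is centered. -/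
open Set

theorem stmt2 (A : Set (Set ℕ)) (hA : ADFamily A)
    (hcard : Cardinal.mk A < splittingNumber) : FinIntersecting A := by
  intro C _hC
  set X : Set ℕ → Set ℕ := fun a => {n | ((C n : Set ℕ) ∩ a).Nonempty} with hXdef
  set S : Set (Set ℕ) := {s | (∃ a ∈ A, s = X a) ∧ s.Infinite} with hSdef
  have hcardS : Cardinal.mk S < splittingNumber := by
    calc Cardinal.mk S ≤ Cardinal.mk (X '' A) := by
          apply Cardinal.mk_le_mk_of_subset
          rintro s ⟨⟨a, ha, rfl⟩, -⟩
          exact ⟨a, ha, rfl⟩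
      _ ≤ Cardinal.mk A := Cardinal.mk_image_le
      _ < _ := hcard
  have hnot : ¬ (∀ Y : Set ℕ, Y.Infinite →
      ∃ s ∈ S, (Y ∩ s).Infinite ∧ (Y \ s).Infinite) := by
    intro h
    have hmem : Cardinal.mk S ∈ {c | ∃ T : Set (Set ℕ), c = Cardinal.mk T ∧
        (∀ s ∈ T, s.Infinite) ∧
        ∀ Y : Set ℕ, Y.Infinite → ∃ s ∈ T, (Y ∩ s).Infinite ∧ (Y \ s).Infinite} :=
      ⟨S, rfl, fun s hs => hs.2, h⟩
    exact absurd (csInf_le' hmem) (not_le.mpr hcardS)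
  push_neg at hnot
  obtain ⟨I, hI, hunsplit⟩ := hnot
  refine ⟨I, hI, ?_⟩
  intro F hF _hFne
  have key : ∀ s ∈ F, (I \ s).Finite := by
    intro s hs
    obtain ⟨⟨a, ha, hseq⟩, hsInf⟩ := hF hs
    have heq : s = I ∩ X a := by
      rw [hseq]; ext n
      simp [hXdef, Set.mem_setOf_eq, Set.mem_inter_iff]
    by_cases hXa : (X a).Infinite
    · have hmem : X a ∈ S := ⟨⟨a, ha, rfl⟩, hXa⟩
      have hns := hunsplit (X a) hmem
      have hfin : (I \ X a).Finite := by
        by_contra hcon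
        rw [heq] at hsInf
        exact hcon (hns hsInf)
      have : I \ s = I \ X a := by
        rw [heq]; ext n
        simp only [Set.mem_diff, Set.mem_inter_iff]
        tauto
      rw [this]; exact hfin
    · exfalso
      apply hXa
      apply Set.Infinite.mono _ hsInf
      rw [heq]; exact Set.inter_subset_right
  have hdiff : (I \ ⋂₀ (F : Set (Set ℕ))).Finite := by
    have hsub : I \ ⋂₀ (F : Set (Set ℕ)) ⊆ ⋃ s ∈ (F : Set (Set ℕ)), (I \ s) := by
      intro n hn
      obtain ⟨hnI, hn2⟩ := hn
      rw [Set.mem_sInter] at hn2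
      push_neg at hn2
      obtain ⟨t, htF, hnt⟩ := hn2
      exact Set.mem_biUnion htF ⟨hnI, hnt⟩
    exact Set.Finite.subset (Set.Finite.biUnion F.finite_toSet key) hsub
  have hinf : (I \ (I \ ⋂₀ (F : Set (Set ℕ)))).Infinite := hI.diff hdiff
  apply hinf.mono
  intro n hn
  obtain ⟨hnI, hn2⟩ := hn
  simp only [Set.mem_diff, not_and, not_not] at hn2
  exact hn2 hnI
end

section
/- The pseudointersection number $\mathfrak{p}$ is at most the cofinality of the splitting number $\mathfrak{s}$; in particular, $\mathfrak{s}$ has uncountable cofinality. -/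
open Set

/-- The pseudointersection number 𝔭. -/
noncomputable def pseudoNumber : Cardinal :=
  sInf {c | ∃ P : Set (Set ℕ), c = Cardinal.mk P ∧ (∀ p ∈ P, p.Infinite) ∧
    Centered P ∧ ¬ ∃ X : Set ℕ, X.Infinite ∧ ∀ p ∈ P, (X \ p).Finite}

namespace Stmt4Aux

def sSet : Set Cardinal := {c | ∃ S : Set (Set ℕ), c = Cardinal.mk S ∧ (∀ s ∈ S, s.Infinite) ∧
    ∀ X : Set ℕ, X.Infinite → ∃ s ∈ S, (X ∩ s).Infinite ∧ (X \ s).Infinite}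

def pSet : Set Cardinal := {c | ∃ P : Set (Set ℕ), c = Cardinal.mk P ∧ (∀ p ∈ P, p.Infinite) ∧
    Centered P ∧ ¬ ∃ X : Set ℕ, X.Infinite ∧ ∀ p ∈ P, (X \ p).Finite}

lemma s_eq : splittingNumber = sInf sSet := rfl
lemma p_eq : pseudoNumber = sInf pSet := rfl

lemma sInter_infinite {F : Finset (Set ℕ)} {p : Set ℕ} (hp : p.Infinite)
    (h : ∀ a ∈ F, (p \ a).Finite) : (⋂₀ (F : Set (Set ℕ))).Infinite := by
  have hfin : (⋃ a ∈ F, (p \ a)).Finite := Set.Finite.biUnion F.finite_toSet h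
  refine (hp.diff hfin).mono ?_
  rintro x ⟨hxp, hx⟩ a ha
  by_contra hxa
  exact hx (mem_biUnion ha ⟨hxp, hxa⟩)

lemma exists_pseudo {P : Set (Set ℕ)} (h1 : ∀ p ∈ P, p.Infinite) (h2 : Centered P)
    (h3 : Cardinal.mk P < pseudoNumber) :
    ∃ X : Set ℕ, X.Infinite ∧ ∀ p ∈ P, (X \ p).Finite := by
  by_contra h
  have hmem : Cardinal.mk P ∈ pSet := ⟨P, rfl, h1, h2, h⟩
  rw [p_eq] at h3
  exact absurd (csInf_le' hmem) (not_le.2 h3)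

lemma exists_unsplit {G : Set (Set ℕ)} (h : Cardinal.mk G < splittingNumber) :
    ∃ X : Set ℕ, X.Infinite ∧ ∀ s ∈ G, ¬((X ∩ s).Infinite ∧ (X \ s).Infinite) := by
  by_contra hcon
  push_neg at hcon
  have hle : Cardinal.mk {s ∈ G | s.Infinite} ≤ Cardinal.mk G :=
    Cardinal.mk_le_mk_of_subset (sep_subset _ _)
  have hmem : Cardinal.mk {s ∈ G | s.Infinite} ∈ sSet := by
    refine ⟨{s ∈ G | s.Infinite}, rfl, fun s hs => hs.2, fun X hX => ?_⟩
    obtain ⟨s, hs, h1, h2⟩ := hcon X hX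
    exact ⟨s, ⟨hs, h1.mono inter_subset_right⟩, h1, h2⟩
  rw [s_eq] at h
  exact absurd (csInf_le' hmem) (not_le.2 (hle.trans_lt h))

lemma exists_unsplit_subset {Y : Set ℕ} (hY : Y.Infinite) {G : Set (Set ℕ)}
    (h : Cardinal.mk G < splittingNumber) :
    ∃ X : Set ℕ, X ⊆ Y ∧ X.Infinite ∧ ∀ s ∈ G, ¬((X ∩ s).Infinite ∧ (X \ s).Infinite) := by
  let e : ℕ → ℕ := fun n => ((Set.Infinite.natEmbedding Y hY) n).1
  have he : Function.Injective e :=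
    fun a b hab => (Set.Infinite.natEmbedding Y hY).injective (Subtype.ext hab)
  have heY : ∀ n, e n ∈ Y := fun n => ((Set.Infinite.natEmbedding Y hY) n).2
  have h2 : Cardinal.mk ((fun s => e ⁻¹' s) '' G) < splittingNumber :=
    Cardinal.mk_image_le.trans_lt h
  obtain ⟨W, hW, hWun⟩ := exists_unsplit h2
  refine ⟨e '' W, ?_, hW.image (he.injOn), ?_⟩
  · rintro x ⟨n, _, rfl⟩; exact heY n
  intro s hs
  have hun := hWun (e ⁻¹' s) ⟨s, hs, rfl⟩
  rintro ⟨h1, h2⟩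
  refine hun ⟨?_, ?_⟩
  · rw [← Set.image_inter_preimage e W s] at h1
    exact h1.of_image _
  · rw [← Set.image_diff_preimage] at h2
    exact h2.of_image _

lemma exists_split {X : Set ℕ} (hX : X.Infinite) :
    ∃ A B : Set ℕ, A ⊆ X ∧ B ⊆ X ∧ A.Infinite ∧ B.Infinite ∧ Disjoint A B := by
  let e : ℕ → ℕ := fun n => ((Set.Infinite.natEmbedding X hX) n).1
  have he : Function.Injective e :=
    fun a b hab => (Set.Infinite.natEmbedding X hX).injective (Subtype.ext hab)
  have heX : ∀ n, e n ∈ X := fun n => ((Set.Infinite.natEmbedding X hX) n).2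
  refine ⟨range (fun k => e (2 * k)), range (fun k => e (2 * k + 1)), ?_, ?_, ?_, ?_, ?_⟩
  · rintro x ⟨k, rfl⟩; exact heX _
  · rintro x ⟨k, rfl⟩; exact heX _
  · exact infinite_range_of_injective (fun a b hab => by have := he hab; omega)
  · exact infinite_range_of_injective (fun a b hab => by have := he hab; omega)
  · rw [Set.disjoint_left]
    rintro x ⟨k, rfl⟩ ⟨j, hj⟩
    have := he hj
    omega

lemma sSet_nonempty : sSet.Nonempty := by
  refine ⟨_, {s : Set ℕ | s.Infinite}, rfl, fun s hs => hs, fun X hX => ?_⟩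
  obtain ⟨A, B, hAX, hBX, hA, hB, hd⟩ := exists_split hX
  refine ⟨A, hA, ?_, ?_⟩
  · exact hA.mono (subset_inter hAX subset_rfl)
  · exact hB.mono (fun x hx => ⟨hBX hx, disjoint_right.1 hd hx⟩)

noncomputable local instance : DecidableEq (Set ℕ) := Classical.decEq _

lemma finset_unsplit (F : Finset (Set ℕ)) : ∀ Y : Set ℕ, Y.Infinite →
    ∃ X, X ⊆ Y ∧ X.Infinite ∧ ∀ s ∈ F, (X ∩ s).Finite ∨ (X \ s).Finite := by
  induction F using Finset.induction_on with
  | empty => exact fun Y hY => ⟨Y, subset_rfl, hY, by simp⟩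
  | @insert s F hs ih =>
    intro Y hY
    obtain ⟨X, hXY, hX, hX2⟩ := ih Y hY
    by_cases hc : (X ∩ s).Infinite
    · refine ⟨X ∩ s, inter_subset_left.trans hXY, hc, ?_⟩
      intro t ht
      rcases Finset.mem_insert.1 ht with rfl | ht
      · exact Or.inr (Set.finite_empty.subset (fun x hx => (hx.2 hx.1.2).elim))
      · rcases hX2 t ht with h | h
        · exact Or.inl (h.subset (fun x hx => ⟨hx.1.1, hx.2⟩))
        · exact Or.inr (h.subset (fun x hx => ⟨hx.1.1, hx.2⟩))
    · have hXs : (X \ s).Infinite := by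
        have heq : X \ (X ∩ s) = X \ s := Set.diff_self_inter
        rw [← heq]
        exact hX.diff (not_infinite.1 hc)
      refine ⟨X \ s, diff_subset.trans hXY, hXs, ?_⟩
      intro t ht
      rcases Finset.mem_insert.1 ht with rfl | ht
      · exact Or.inl (Set.finite_empty.subset (fun x hx => (hx.1.2 hx.2).elim))
      · rcases hX2 t ht with h | h
        · exact Or.inl (h.subset (fun x hx => ⟨hx.1.1, hx.2⟩))
        · exact Or.inr (h.subset (fun x hx => ⟨hx.1.1, hx.2⟩))

lemma aleph0_le_s : Cardinal.aleph0 ≤ splittingNumber := by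
  rw [s_eq]
  refine le_csInf sSet_nonempty ?_
  rintro c ⟨S, rfl, hinf, hsplit⟩
  by_contra hlt
  have hSfin : S.Finite := Cardinal.lt_aleph0_iff_set_finite.1 (not_le.1 hlt)
  obtain ⟨X, _, hX, hXun⟩ := finset_unsplit hSfin.toFinset univ infinite_univ
  obtain ⟨s, hs, h1, h2⟩ := hsplit X hX
  rcases hXun s (hSfin.mem_toFinset.2 hs) with h | h
  · exact h1 h
  · exact h2 h

lemma pSet_nonempty : pSet.Nonempty := by
  refine ⟨_, {s : Set ℕ | s ∈ Filter.hyperfilter ℕ}, rfl, ?_, ?_, ?_⟩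
  · intro p hp
    by_contra hfin
    exact (Set.not_infinite.1 hfin).notMem_hyperfilter hp
  · intro F hF hFne
    have hmem : ⋂₀ (F : Set (Set ℕ)) ∈ Filter.hyperfilter ℕ :=
      (Filter.sInter_mem F.finite_toSet).2 (fun s hs => hF hs)
    by_contra hfin
    exact (Set.not_infinite.1 hfin).notMem_hyperfilter hmem
  · rintro ⟨X, hX, hXp⟩
    obtain ⟨A, B, hAX, hBX, hA, hB, hd⟩ := exists_split hX
    rcases (Filter.hyperfilter ℕ).mem_or_compl_mem A with h | h
    · exact hB ((hXp A h).subset (fun x hx => ⟨hBX hx, disjoint_right.1 hd hx⟩))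
    · exact hA ((hXp Aᶜ h).subset (fun x hx => ⟨hAX hx, by simpa using hx⟩))

lemma aleph0_lt_p : Cardinal.aleph0 < pseudoNumber := by
  rw [p_eq]
  rcases pSet_nonempty with ⟨c0, hc0⟩
  have hall : ∀ c ∈ pSet, Cardinal.aleph0 < c := by
    rintro c ⟨P, rfl, hinf, hcent, hnop⟩
    by_contra hle
    apply hnop
    have hPc : P.Countable := Cardinal.le_aleph0_iff_set_countable.1 (not_lt.1 hle)
    rcases P.eq_empty_or_nonempty with rfl | hne
    · exact ⟨univ, infinite_univ, by simp⟩
    obtain ⟨f, rfl⟩ := hPc.exists_eq_range hne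
    have hA : ∀ n : ℕ, (⋂ k ∈ Finset.range (n + 1), f k).Infinite := by
      intro n
      have h1 : ((Finset.range (n + 1)).image f : Set (Set ℕ)) ⊆ range f := by
        intro s hs
        simp only [Finset.coe_image, mem_image] at hs
        obtain ⟨k, _, rfl⟩ := hs
        exact mem_range_self k
      have h2 := hcent _ h1 (Finset.image_nonempty.2 (Finset.nonempty_range_iff.2 (by omega)))
      have h3 : ⋂₀ (((Finset.range (n + 1)).image f : Finset (Set ℕ)) : Set (Set ℕ))
          = ⋂ k ∈ Finset.range (n + 1), f k := by
        rw [Finset.coe_image, sInter_image]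
        simp [Set.mem_image]
      rwa [h3] at h2
    have key : ∀ n m : ℕ, ∃ x, x ∈ (⋂ k ∈ Finset.range (n + 1), f k) ∧ m < x := by
      intro n m
      obtain ⟨x, hx1, hx2⟩ := (hA n).exists_gt m
      exact ⟨x, hx1, hx2⟩
    choose g hg1 hg2 using key
    let x : ℕ → ℕ := fun n => Nat.rec (g 0 0) (fun n xn => g (n + 1) xn) n
    have hxmem : ∀ n, x n ∈ ⋂ k ∈ Finset.range (n + 1), f k := by
      intro n; cases n with
      | zero => exact hg1 0 0
      | succ m => exact hg1 (m + 1) (x m)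
    have hxmono : StrictMono x := strictMono_nat_of_lt_succ (fun n => hg2 (n + 1) (x n))
    refine ⟨range x, infinite_range_of_injective hxmono.injective, ?_⟩
    rintro p ⟨m, rfl⟩
    have hsub : range x \ f m ⊆ x '' (Iio m) := by
      rintro y ⟨⟨n, rfl⟩, hy⟩
      rcases lt_or_ge n m with hnm | hnm
      · exact ⟨n, hnm, rfl⟩
      · exfalso
        apply hy
        have := hxmem n
        simp only [mem_iInter] at this
        exact this m (Finset.mem_range.2 (by omega))
    exact ((finite_Iio m).image x).subset hsub
  exact hall _ (csInf_mem pSet_nonempty)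

lemma centered_of_chain {γ : Type} [LinearOrder γ] {X : γ → Set ℕ} {I : Set γ}
    (hinf : ∀ i ∈ I, (X i).Infinite)
    (hchain : ∀ i ∈ I, ∀ j ∈ I, j < i → (X i \ X j).Finite) :
    Centered (X '' I) := by
  intro F hF hFne
  have hidx : ∀ a : F, ∃ j : γ, j ∈ I ∧ X j = (a : Set ℕ) := fun a => hF a.2
  choose idx hidx1 hidx2 using hidx
  obtain ⟨b, _, hb⟩ := Finset.exists_max_image F.attach idx
    (Finset.attach_nonempty_iff.2 hFne)
  refine sInter_infinite (hinf _ (hidx1 b)) ?_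
  intro a ha
  have ha2 : X (idx ⟨a, ha⟩) = a := hidx2 ⟨a, ha⟩
  rcases lt_or_eq_of_le (hb ⟨a, ha⟩ (Finset.mem_attach _ _)) with hlt | heq
  · rw [← ha2]
    exact hchain _ (hidx1 b) _ (hidx1 ⟨a, ha⟩) hlt
  · rw [← ha2, heq]
    simp

open scoped Classical in
noncomputable def buildChain {γ : Type} [LinearOrder γ] [WellFoundedLT γ]
    (seg : γ → Set (Set ℕ)) : γ → Set ℕ :=
  (IsWellFounded.wf (r := ((· < ·) : γ → γ → Prop))).fix
    (fun i prev =>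
      if h : ∃ Z : Set ℕ, Z.Infinite ∧ (∀ j (hj : j < i), (Z \ prev j hj).Finite) ∧
          ∀ s ∈ seg i, ¬((Z ∩ s).Infinite ∧ (Z \ s).Infinite)
      then h.choose else ∅)

open scoped Classical in
lemma buildChain_eq {γ : Type} [LinearOrder γ] [WellFoundedLT γ]
    (seg : γ → Set (Set ℕ)) (i : γ) :
    buildChain seg i =
      if h : ∃ Z : Set ℕ, Z.Infinite ∧ (∀ j (_ : j < i), (Z \ buildChain seg j).Finite) ∧
          ∀ s ∈ seg i, ¬((Z ∩ s).Infinite ∧ (Z \ s).Infinite)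
      then h.choose else ∅ :=
  WellFounded.fix_eq _ _ i

open scoped Classical in
lemma buildChain_spec {γ : Type} [LinearOrder γ] [WellFoundedLT γ]
    (seg : γ → Set (Set ℕ)) (i : γ)
    (h : ∃ Z : Set ℕ, Z.Infinite ∧ (∀ j (_ : j < i), (Z \ buildChain seg j).Finite) ∧
          ∀ s ∈ seg i, ¬((Z ∩ s).Infinite ∧ (Z \ s).Infinite)) :
    (buildChain seg i).Infinite ∧ (∀ j, j < i → (buildChain seg i \ buildChain seg j).Finite) ∧
      ∀ s ∈ seg i, ¬((buildChain seg i ∩ s).Infinite ∧ (buildChain seg i \ s).Infinite) := by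
  rw [buildChain_eq seg i, dif_pos h]
  obtain ⟨h1, h2, h3⟩ := h.choose_spec
  exact ⟨h1, fun j hj => h2 j hj, h3⟩

lemma add_one_lt_s {a : Cardinal} (ha : a < splittingNumber) : a + 1 < splittingNumber := by
  rcases lt_or_ge a Cardinal.aleph0 with h | h
  · exact lt_of_lt_of_le (Cardinal.add_lt_aleph0 h Cardinal.one_lt_aleph0) aleph0_le_s
  · rwa [Cardinal.add_one_eq h]

lemma main_le : pseudoNumber ≤ (splittingNumber.ord).cof := by
  by_contra hle
  push_neg at hle
  obtain ⟨S, hSmk, hSinf, hSsplit⟩ : splittingNumber ∈ sSet := csInf_mem sSet_nonempty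
  have hmkβ : (Cardinal.mk (splittingNumber.ord).ToType) = Cardinal.mk S := by
    rw [Cardinal.mk_ord_toType]; exact hSmk
  obtain ⟨eqS⟩ := Cardinal.eq.1 hmkβ
  haveI : IsWellOrder (splittingNumber.ord).ToType (· < ·) := isWellOrder_lt
  obtain ⟨T, hTunb, hTmk⟩ :=
    Order.exists_cof_eq (splittingNumber.ord).ToType
  rw [Ordinal.cof_toType] at hTmk
  have hmkγ : (Cardinal.mk ((splittingNumber.ord).cof).ord.ToType) = Cardinal.mk T := by
    rw [Cardinal.mk_ord_toType, hTmk]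
  obtain ⟨eqT⟩ := Cardinal.eq.1 hmkγ
  set γ := ((splittingNumber.ord).cof).ord.ToType with hγ
  set e : (splittingNumber.ord).ToType → Set ℕ := fun b => (eqS b : Set ℕ) with he
  set seg : γ → Set (Set ℕ) := fun i => e '' (Iic ((eqT i : (splittingNumber.ord).ToType)))
    with hseg
  set X : γ → Set ℕ := buildChain seg with hXdef
  -- segment sizes are small
  have hsegsmall : ∀ i : γ, Cardinal.mk (seg i) < splittingNumber := by
    intro i
    refine lt_of_le_of_lt Cardinal.mk_image_le ?_
    have h1 : Cardinal.mk (Iic ((eqT i : (splittingNumber.ord).ToType)))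
        ≤ Cardinal.mk (Iio ((eqT i : (splittingNumber.ord).ToType))) + 1 := by
      rw [← Set.Iio_union_right, Set.union_singleton]
      exact Cardinal.mk_insert_le
    exact lt_of_le_of_lt h1 (add_one_lt_s (Cardinal.mk_Iio_ord_toType _))
  -- main invariant
  have inv : ∀ i : γ, (X i).Infinite ∧ (∀ j, j < i → (X i \ X j).Finite) ∧
      ∀ s ∈ seg i, ¬((X i ∩ s).Infinite ∧ (X i \ s).Infinite) := by
    intro i
    apply WellFoundedLT.induction i
    intro i IH
    apply buildChain_spec
    -- previous family
    have hPmk : Cardinal.mk (X '' (Iio i)) < pseudoNumber :=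
      lt_trans (lt_of_le_of_lt Cardinal.mk_image_le (Cardinal.mk_Iio_ord_toType i)) hle
    have hPinf : ∀ p ∈ X '' (Iio i), p.Infinite := by
      rintro p ⟨j, hj, rfl⟩; exact (IH j hj).1
    have hPcent : Centered (X '' (Iio i)) :=
      centered_of_chain (fun j hj => (IH j hj).1)
        (fun a ha b hb hba => (IH a ha).2.1 b hba)
    obtain ⟨Y, hY, hYps⟩ := exists_pseudo hPinf hPcent hPmk
    obtain ⟨Z, hZY, hZinf, hZun⟩ := exists_unsplit_subset hY (hsegsmall i)
    refine ⟨Z, hZinf, ?_, hZun⟩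
    intro j hj
    exact (hYps (X j) ⟨j, hj, rfl⟩).subset (diff_subset_diff_left hZY)
  -- whole chain
  have hRmk : Cardinal.mk (X '' (univ : Set γ)) < pseudoNumber := by
    refine lt_of_le_of_lt ?_ hle
    rw [image_univ]
    exact le_of_le_of_eq Cardinal.mk_range_le (Cardinal.mk_ord_toType _)
  have hRinf : ∀ p ∈ X '' (univ : Set γ), p.Infinite := by
    rintro p ⟨j, _, rfl⟩; exact (inv j).1
  have hRcent : Centered (X '' (univ : Set γ)) :=
    centered_of_chain (fun j _ => (inv j).1) (fun a _ b _ hba => (inv a).2.1 b hba)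
  obtain ⟨Y, hY, hYps⟩ := exists_pseudo hRinf hRcent hRmk
  obtain ⟨s, hs, h1, h2⟩ := hSsplit Y hY
  obtain ⟨t, htT, hbt⟩ := hTunb (eqS.symm ⟨s, hs⟩)
  set i : γ := eqT.symm ⟨t, htT⟩ with hi
  have hsseg : s ∈ seg i := by
    refine ⟨eqS.symm ⟨s, hs⟩, ?_, ?_⟩
    · rw [hi, mem_Iic]
      have : eqT (eqT.symm ⟨t, htT⟩) = ⟨t, htT⟩ := Equiv.apply_symm_apply _ _
      rw [this]
      exact hbt
    · rw [he]; simp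
  have hun := (inv i).2.2 s hsseg
  have hYX : (Y \ X i).Finite := hYps (X i) ⟨i, mem_univ i, rfl⟩
  apply hun
  constructor
  · by_contra hf
    refine h1 (((not_infinite.1 hf).union hYX).subset ?_)
    intro x hx
    by_cases hxi : x ∈ X i
    · exact Or.inl ⟨hxi, hx.2⟩
    · exact Or.inr ⟨hx.1, hxi⟩
  · by_contra hf
    refine h2 (((not_infinite.1 hf).union hYX).subset ?_)
    intro x hx
    by_cases hxi : x ∈ X i
    · exact Or.inl ⟨hxi, hx.2⟩
    · exact Or.inr ⟨hx.1, hxi⟩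

end Stmt4Aux

theorem stmt4 : pseudoNumber ≤ (splittingNumber.ord).cof ∧
    Cardinal.aleph0 < (splittingNumber.ord).cof := by
  exact ⟨Stmt4Aux.main_le, lt_of_lt_of_le Stmt4Aux.aleph0_lt_p Stmt4Aux.main_le⟩
end

section
/- If the almost disjointness number satisfies $\mathfrak{a}<\mathfrak{s}$, then there exists a fin-intersecting maximal almost disjoint family on $\omega$. -/
open Set

/-- The almost disjointness number 𝔞. -/
noncomputable def madNumber : Cardinal :=
  sInf {c | ∃ A : Set (Set ℕ), c = Cardinal.mk A ∧ MADFamily A}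

/-- The base almost disjoint family: columns of the pairing function. -/
lemma base_AD : ADFamily (Set.range (fun k => Set.range (Nat.pair k))) := by
  refine ⟨?_, ?_, ?_⟩
  · apply Set.infinite_range_of_injective
    intro k k' hkk'
    have : Nat.pair k 0 ∈ Set.range (Nat.pair k') := by
      simp only [] at hkk'
      rw [← hkk']; exact ⟨0, rfl⟩
    obtain ⟨m, hm⟩ := this
    exact ((Nat.pair_eq_pair.mp hm).1).symm
  · rintro a ⟨k, rfl⟩
    exact Set.infinite_range_of_injective (fun m m' h => (Nat.pair_eq_pair.mp h).2)
  · rintro a ⟨k, rfl⟩ b ⟨k', rfl⟩ hne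
    have : Set.range (Nat.pair k) ∩ Set.range (Nat.pair k') = ∅ := by
      ext x
      simp only [Set.mem_inter_iff, Set.mem_range, Set.mem_empty_iff_false, iff_false]
      rintro ⟨⟨m, rfl⟩, ⟨m', hm'⟩⟩
      obtain ⟨h1, h2⟩ := Nat.pair_eq_pair.mp hm'
      exact hne (by rw [h1])
    rw [this]; exact Set.finite_empty

lemma exists_MAD : ∃ A : Set (Set ℕ), MADFamily A := by
  obtain ⟨M, -, hM⟩ := zorn_subset_nonempty {A : Set (Set ℕ) | ADFamily A}
    (fun c hc hchain hcne => by
      obtain ⟨A₀, hA₀⟩ := hcne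
      refine ⟨⋃₀ c, ⟨?_, ?_, ?_⟩, fun s hs => Set.subset_sUnion_of_mem hs⟩
      · exact ((hc hA₀).1).mono (Set.subset_sUnion_of_mem hA₀)
      · rintro a ⟨A, hA, haA⟩
        exact (hc hA).2.1 a haA
      · rintro a ⟨A, hA, haA⟩ b ⟨B, hB, hbB⟩ hab
        rcases hchain.total hA hB with hAB | hBA
        · exact (hc hB).2.2 a (hAB haA) b hbB hab
        · exact (hc hA).2.2 a haA b (hBA hbB) hab)
    _ base_AD
  refine ⟨M, hM.prop, ?_⟩
  intro X hX
  by_contra hcon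
  push_neg at hcon
  have hXM : X ∉ M := by
    intro hXM
    exact (by rwa [Set.inter_self] : (X ∩ X).Infinite) (hcon X hXM)
  have : ADFamily (insert X M) := by
    obtain ⟨hMinf, hMall, hMpair⟩ := hM.prop
    refine ⟨hMinf.mono (Set.subset_insert _ _), ?_, ?_⟩
    · rintro a (rfl | ha)
      · exact hX
      · exact hMall a ha
    · rintro a (rfl | ha) b (rfl | hb) hab
      · exact absurd rfl hab
      · have := hcon b hb
        exact this
      · have := hcon a ha
        rwa [Set.inter_comm]
      · exact hMpair a ha b hb hab
  have := hM.eq_of_subset this (Set.subset_insert _ _)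
  exact hXM (this ▸ Set.mem_insert X M)

theorem stmt5 (h : madNumber < splittingNumber) :
    ∃ A : Set (Set ℕ), MADFamily A ∧ FinIntersecting A := by
  -- get a MAD family realizing madNumber
  have hne : {c | ∃ A : Set (Set ℕ), c = Cardinal.mk A ∧ MADFamily A}.Nonempty := by
    obtain ⟨A, hA⟩ := exists_MAD
    exact ⟨Cardinal.mk A, A, rfl, hA⟩
  obtain ⟨A, hmk, hA⟩ := csInf_mem hne
  refine ⟨A, hA, ?_⟩
  intro C hC
  -- traces
  set tr : Set ℕ → Set ℕ := fun a => {n : ℕ | ((C n : Set ℕ) ∩ a).Nonempty} with htr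
  set F : Set (Set ℕ) := tr '' {a | a ∈ A ∧ (tr a).Infinite} with hF
  have hmkF : Cardinal.mk F < splittingNumber := by
    calc Cardinal.mk F ≤ Cardinal.mk {a | a ∈ A ∧ (tr a).Infinite} := Cardinal.mk_image_le
    _ ≤ Cardinal.mk A := Cardinal.mk_le_mk_of_subset (fun a ha => ha.1)
    _ = madNumber := hmk.symm
    _ < splittingNumber := h
  -- F is not a splitting family
  have hnotsplit : ¬ (∀ X : Set ℕ, X.Infinite → ∃ s ∈ F, (X ∩ s).Infinite ∧ (X \ s).Infinite) := by
    intro hsplit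
    have : splittingNumber ≤ Cardinal.mk F :=
      csInf_le' ⟨F, rfl, by rintro s ⟨a, ⟨-, ha⟩, rfl⟩; exact ha, hsplit⟩
    exact absurd hmkF (not_lt.mpr this)
  push_neg at hnotsplit
  obtain ⟨I, hI, hIF⟩ := hnotsplit
  refine ⟨I, hI, ?_⟩
  -- Centered
  intro G hG hGne
  -- every member of G is cofinite in I
  have hcof : ∀ S ∈ G, I \ S ⊆ I \ S ∧ (I \ S).Finite ∧ I ∩ S = S := by
    intro S hSG
    obtain ⟨⟨a, haA, hSa⟩, hSinf⟩ := hG hSG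
    have hSsub : S = I ∩ tr a := by
      rw [hSa]; ext n; simp [htr, Set.mem_sep_iff]
    have htra : (tr a).Infinite := by
      apply Set.Infinite.mono (s := S)
      · rw [hSsub]; exact Set.inter_subset_right
      · exact hSinf
    have : ¬ ((I ∩ tr a).Infinite ∧ (I \ tr a).Infinite) := by
      intro ⟨h1, h2⟩
      exact h2 (hIF (tr a) ⟨a, ⟨haA, htra⟩, rfl⟩ h1)
    have hIdiff : (I \ tr a).Finite := by
      by_contra hcon
      exact this ⟨hSsub ▸ hSinf, hcon⟩
    refine ⟨le_refl _, ?_, ?_⟩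
    · have : I \ S = I \ tr a := by
        rw [hSsub]; ext n; simp [Set.mem_diff]
      rw [this]; exact hIdiff
    · rw [hSsub]; ext n; simp
  have hsub : I \ (⋃ S ∈ G, (I \ S)) ⊆ ⋂₀ (G : Set (Set ℕ)) := by
    intro x hx
    rw [Set.mem_sInter]
    intro S hSG
    rw [Set.mem_diff] at hx
    by_contra hxS
    exact hx.2 (Set.mem_biUnion hSG ⟨hx.1, hxS⟩)
  have hfin : (⋃ S ∈ G, (I \ S)).Finite := by
    apply Set.Finite.biUnion (Finset.finite_toSet G)
    intro S hSG
    exact (hcof S hSG).2.1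
  exact ((hI.diff hfin).mono hsub)
end

section
/- Let $C$ be an unbounded fin sequence. Then every completely separable MAD family consisting of selectors for $C$ is not fin-intersecting. -/
open Set

/-
Given an infinite `I`, split it into disjoint infinite sets `I₁` and `I₂`. Since the blocks `C n`
grow and every member of `A` meets each block in at most one point, finitely many members of `A`
cannot almost cover `⋃ n ∈ Iⱼ, C n`; complete separability then yields `aⱼ ∈ A` inside it. The
trace of `aⱼ` on `I` is infinite and contained in `Iⱼ`, so the two traces are disjoint members of
the trace family, which is therefore not centered.
-/

open Function

theorem Set.Infinite.exists_disjoint_infinite_subsets {α : Type*} {s : Set α} (hs : s.Infinite) :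
    ∃ t u : Set α, t ⊆ s ∧ u ⊆ s ∧ Disjoint t u ∧ t.Infinite ∧ u.Infinite := by
  obtain ⟨t, u, htu, hdisj, hcard⟩ := hs.exists_union_disjoint_cardinal_eq_of_infinite
  have hfin_iff : t.Finite ↔ u.Finite := by
    rw [← Cardinal.lt_aleph0_iff_set_finite, ← Cardinal.lt_aleph0_iff_set_finite, hcard]
  have ht : t.Infinite := fun ht => hs (htu ▸ ht.union (hfin_iff.mp ht))
  exact ⟨t, u, htu ▸ subset_union_left, htu ▸ subset_union_right, hdisj, ht,
    fun hu => ht (hfin_iff.mpr hu)⟩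

theorem Centered.inter_infinite {𝒞 : Set (Set ℕ)} (h𝒞 : Centered 𝒞) {S T : Set ℕ}
    (hS : S ∈ 𝒞) (hT : T ∈ 𝒞) : (S ∩ T).Infinite := by
  classical
  have hsub : (↑({S, T} : Finset (Set ℕ)) : Set (Set ℕ)) ⊆ 𝒞 := by
    simp [insert_subset_iff, hS, hT]
  simpa using h𝒞 {S, T} hsub (Finset.insert_nonempty S {T})

theorem Finset.card_le_card_of_subset_sUnion {α : Type*} {s : Finset α} {B : Finset (Set α)}
    (hsel : ∀ b ∈ B, ((s : Set α) ∩ b).Subsingleton) (hcover : (s : Set α) ⊆ ⋃₀ ↑B) :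
    s.card ≤ B.card := by
  have hmem : ∀ x ∈ s, ∃ b ∈ B, x ∈ b := fun x hx => by simpa using hcover hx
  choose! f hfB hxf using hmem
  refine Finset.card_le_card_of_injOn f hfB fun x hx y hy hxy => ?_
  exact hsel (f x) (hfB x hx) ⟨hx, hxf x hx⟩ ⟨hy, hxy ▸ hxf y hy⟩

section Blocks

variable {ι α : Type*} {C : ι → Finset α}

theorem infinite_of_forall_inter_nonempty (hC : Pairwise (Disjoint on C)) {K : Set ι}
    (hK : K.Infinite) {Y : Set α} (hY : ∀ n ∈ K, ((C n : Set α) ∩ Y).Nonempty) : Y.Infinite := by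
  obtain ⟨n₀, hn₀⟩ := hK.nonempty
  have : Nonempty α := ⟨(hY n₀ hn₀).some⟩
  choose! x hxC hxY using hY
  have hinj : InjOn x K := fun n hn m hm hxnm => by
    by_contra hne
    exact Finset.disjoint_left.mp (hC hne) (hxC n hn) (hxnm ▸ hxC m hm)
  exact (hK.image hinj).mono (image_subset_iff.mpr hxY)

theorem infinite_setOf_inter_nonempty {a : Set α} (ha : a.Infinite) {J : Set ι}
    (hcover : a ⊆ ⋃ n ∈ J, (C n : Set α)) : {n | ((C n : Set α) ∩ a).Nonempty}.Infinite := by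
  refine fun hfin => ha ((hfin.biUnion fun n _ => (C n).finite_toSet).subset fun x hx => ?_)
  obtain ⟨n, -, hn⟩ := mem_iUnion₂.mp (hcover hx)
  exact mem_biUnion ⟨x, hn, hx⟩ hn

theorem setOf_inter_nonempty_subset (hC : Pairwise (Disjoint on C)) {a : Set α} {J : Set ι}
    (hcover : a ⊆ ⋃ n ∈ J, (C n : Set α)) : {n | ((C n : Set α) ∩ a).Nonempty} ⊆ J := by
  rintro n ⟨x, hxn, hxa⟩
  obtain ⟨m, hmJ, hxm⟩ := mem_iUnion₂.mp (hcover hxa)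
  obtain rfl : n = m := by
    by_contra hne
    exact Finset.disjoint_left.mp (hC hne) hxn hxm
  exact hmJ

end Blocks

theorem iPlus_biUnion {ι : Type*} {C : ι → Finset ℕ} (hC : Pairwise (Disjoint on C))
    (hub : ∀ k : ℕ, {n : ι | (C n).card < k}.Finite) {A : Set (Set ℕ)}
    (hsel : ∀ a ∈ A, ∀ n, ((C n : Set ℕ) ∩ a).Subsingleton) {J : Set ι} (hJ : J.Infinite) :
    IPlus A (⋃ n ∈ J, (C n : Set ℕ)) := by
  intro B hB
  refine infinite_of_forall_inter_nonempty hC (hJ.sdiff (hub (B.card + 1))) ?_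
  rintro n ⟨hnJ, hn⟩
  by_contra hempty
  have hcover : (C n : Set ℕ) ⊆ ⋃₀ ↑B := fun x hx => by
    by_contra hxB
    exact hempty ⟨x, hx, mem_biUnion hnJ hx, hxB⟩
  have hcard := (C n).card_le_card_of_subset_sUnion (fun b hb => hsel b (hB hb) n) hcover
  exact hn (Nat.lt_succ_of_le hcard)

theorem exists_mem_traceFamily_subset {C : ℕ → Finset ℕ} (hC : Pairwise (Disjoint on C))
    (hub : ∀ k : ℕ, {n : ℕ | (C n).card < k}.Finite) {A : Set (Set ℕ)}
    (hA : ∀ a ∈ A, a.Infinite) (hsel : ∀ a ∈ A, ∀ n, ((C n : Set ℕ) ∩ a).Subsingleton)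
    (hcs : ∀ X : Set ℕ, IPlus A X → ∃ a ∈ A, a ⊆ X) {I J : Set ℕ} (hJI : J ⊆ I)
    (hJ : J.Infinite) : ∃ S ∈ traceFamily A C I, S ⊆ J := by
  obtain ⟨a, haA, hcover⟩ := hcs _ (iPlus_biUnion hC hub hsel hJ)
  have htrace := setOf_inter_nonempty_subset hC hcover
  have hsep : {n ∈ I | ((C n : Set ℕ) ∩ a).Nonempty} = {n | ((C n : Set ℕ) ∩ a).Nonempty} :=
    ext fun n => ⟨fun hn => hn.2, fun hn => ⟨hJI (htrace hn), hn⟩⟩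
  refine ⟨_, ⟨⟨a, haA, rfl⟩, ?_⟩, hsep ▸ htrace⟩
  rw [hsep]
  exact infinite_setOf_inter_nonempty (hA a haA) hcover

theorem stmt8 (C : ℕ → Finset ℕ) (hC : FinSeq C)
    (hub : ∀ k : ℕ, {n : ℕ | (C n).card < k}.Finite)
    (A : Set (Set ℕ)) (hA : MADFamily A)
    (hsel : ∀ a ∈ A, ∀ n, ((C n : Set ℕ) ∩ a).Subsingleton)
    (hcs : ∀ X : Set ℕ, IPlus A X → ∃ a ∈ A, a ⊆ X) :
    ¬ FinIntersecting A := by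
  intro hfi
  obtain ⟨I, hI, hcent⟩ := hfi C hC
  have hdisj : Pairwise (Disjoint on C) := fun n m hnm => hC.2 n m hnm
  obtain ⟨I₁, I₂, hI₁, hI₂, hI₁₂, hI₁inf, hI₂inf⟩ := hI.exists_disjoint_infinite_subsets
  obtain ⟨S₁, hS₁, hS₁I₁⟩ :=
    exists_mem_traceFamily_subset hdisj hub hA.1.2.1 hsel hcs hI₁ hI₁inf
  obtain ⟨S₂, hS₂, hS₂I₂⟩ :=
    exists_mem_traceFamily_subset hdisj hub hA.1.2.1 hsel hcs hI₂ hI₂inf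
  have hempty : S₁ ∩ S₂ = ∅ := (hI₁₂.mono hS₁I₁ hS₂I₂).inter_eq
  exact hcent.inter_infinite hS₁ hS₂ (hempty ▸ finite_empty)
end

section
/- Let $\mathcal{A}=\{a_\alpha:\alpha<\beta\}$ be a countably infinite almost disjoint family enumerated injectively by a countable ordinal $\beta$, let $f:\beta\to\omega$ be a bijection, and let $C$ be a fin sequence. Define recursively $I_0=\omega$ and $I_{n+1}=\{i\in I_n: C(i)\cap a_{f^{-1}(n)}\neq\emptyset\}$ if this set is infinite, and otherwise $I_{n+1}=\{i\in I_n: C(i)\cap a_{f^{-1}(n)}=\emptyset\}$. Let $I=\mathrm{Pseudo}((I_n)_{n\in\omega})$. Then $I$ is infinite and for every $a\in\mathcal{A}$, either $\{i\in I:C(i)\cap a=\emptyset\}$ is finite or $\{i\in I:C(i)\cap a\neq\emptyset\}$ is finite; consequently $\{\{n\in I:a\cap C(n)\neq\emptyset\}:a\in\mathcal{A}\}\setminus[I]^{<\omega}$ is centered and each of its finite intersections is cofinite in $I$. -/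
/-!
Each step of the recursion decides, for one member `e n` of the family, whether the next set
meets it through `C` everywhere or nowhere, and it keeps the set infinite. A pseudointersection
of the resulting decreasing sequence is almost contained in every `I (n + 1)`, so it inherits all
these decisions up to finitely many exceptions: every trace on it is finite or cofinite, and the
infinite traces, being cofinite, have cofinite (hence infinite) finite intersections.
-/

open Set

/-- Pseudo(A) = {min(⋂_{k≤n} b_k \ n) : n ∈ ω}. -/
noncomputable def Pseudo (b : ℕ → Set ℕ) : Set ℕ :=
  Set.range (fun n => sInf ((⋂ k ∈ Set.Iic n, b k) ∩ {m | n ≤ m}))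

section Pseudo

variable {b : ℕ → Set ℕ}

lemma sInf_biInter_Iic_mem_and_ge (hb : ∀ n, (⋂ k ∈ Iic n, b k).Infinite) (n : ℕ) :
    sInf ((⋂ k ∈ Iic n, b k) ∩ {m | n ≤ m}) ∈ ⋂ k ∈ Iic n, b k ∧
      n ≤ sInf ((⋂ k ∈ Iic n, b k) ∩ {m | n ≤ m}) := by
  obtain ⟨m, hm, hnm⟩ := (hb n).exists_gt n
  have hne : ((⋂ k ∈ Iic n, b k) ∩ {m | n ≤ m}).Nonempty := ⟨m, hm, hnm.le⟩
  exact Nat.sInf_mem hne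

lemma pseudo_infinite (hb : ∀ n, (⋂ k ∈ Iic n, b k).Infinite) : (Pseudo b).Infinite :=
  infinite_of_forall_exists_gt fun a =>
    ⟨_, mem_range_self (a + 1), Nat.lt_of_succ_le (sInf_biInter_Iic_mem_and_ge hb (a + 1)).2⟩

lemma pseudo_diff_finite (hb : ∀ n, (⋂ k ∈ Iic n, b k).Infinite) (m : ℕ) :
    (Pseudo b \ b m).Finite := by
  refine ((finite_Iio m).image fun n => sInf ((⋂ k ∈ Iic n, b k) ∩ {j | n ≤ j})).subset ?_
  rintro _ ⟨⟨n, rfl⟩, hnotin⟩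
  refine ⟨n, mem_Iio.2 (lt_of_not_ge fun hmn => hnotin ?_), rfl⟩
  exact mem_iInter₂.1 (sInf_biInter_Iic_mem_and_ge hb n).1 m hmn

end Pseudo

def IsSplitSequence (C : ℕ → Finset ℕ) (e I : ℕ → Set ℕ) : Prop :=
  ∀ n,
    ({i ∈ I n | ((C i : Set ℕ) ∩ e n).Nonempty}.Infinite ∧
      I (n + 1) = {i ∈ I n | ((C i : Set ℕ) ∩ e n).Nonempty}) ∨
    (¬ {i ∈ I n | ((C i : Set ℕ) ∩ e n).Nonempty}.Infinite ∧
      I (n + 1) = {i ∈ I n | (C i : Set ℕ) ∩ e n = ∅})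

namespace IsSplitSequence

variable {C : ℕ → Finset ℕ} {e I : ℕ → Set ℕ}

lemma antitone (h : IsSplitSequence C e I) : Antitone I :=
  antitone_nat_of_succ_le fun n => by
    rcases h n with ⟨_, hI⟩ | ⟨_, hI⟩ <;> rw [hI] <;> exact sep_subset _ _

lemma infinite (h : IsSplitSequence C e I) (h0 : (I 0).Infinite) (n : ℕ) : (I n).Infinite := by
  induction n with
  | zero => exact h0
  | succ n ih =>
    rcases h n with ⟨hmeet, hI⟩ | ⟨hmeet, hI⟩
    · rwa [hI]
    · have hmiss : {i ∈ I n | (C i : Set ℕ) ∩ e n = ∅} =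
          I n \ {i ∈ I n | ((C i : Set ℕ) ∩ e n).Nonempty} := by
        ext i
        simp [nonempty_iff_ne_empty]
      rw [hI, hmiss]
      exact ih.sdiff (not_infinite.1 hmeet)

lemma dichotomy (h : IsSplitSequence C e I) {P : Set ℕ} {n : ℕ} (hP : (P \ I (n + 1)).Finite) :
    {i ∈ P | (C i : Set ℕ) ∩ e n = ∅}.Finite ∨
      {i ∈ P | ((C i : Set ℕ) ∩ e n).Nonempty}.Finite := by
  rcases h n with ⟨_, hI⟩ | ⟨_, hI⟩
  · refine .inl (hP.subset fun i ⟨hi, hmiss⟩ => ⟨hi, fun hin => ?_⟩)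
    rw [hI] at hin
    exact hin.2.ne_empty hmiss
  · refine .inr (hP.subset fun i ⟨hi, hmeet⟩ => ⟨hi, fun hin => ?_⟩)
    rw [hI] at hin
    exact hmeet.ne_empty hin.2

end IsSplitSequence

section TraceFamily

variable {A : Set (Set ℕ)} {C : ℕ → Finset ℕ} {P : Set ℕ}

lemma diff_sInter_finite_of_subset_traceFamily
    (hA : ∀ a ∈ A, {i ∈ P | (C i : Set ℕ) ∩ a = ∅}.Finite ∨
      {i ∈ P | ((C i : Set ℕ) ∩ a).Nonempty}.Finite)
    {F : Finset (Set ℕ)} (hF : ↑F ⊆ traceFamily A C P) :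
    (P \ ⋂₀ (F : Set (Set ℕ))).Finite := by
  simp_rw [sInter_eq_biInter, sdiff_iInter]
  refine F.finite_toSet.biUnion fun S hS => ?_
  obtain ⟨⟨a, ha, rfl⟩, hSinf⟩ := hF hS
  refine (hA a ha).resolve_right hSinf |>.subset fun i ⟨hi, hmeet⟩ => ⟨hi, ?_⟩
  simpa [hi, not_nonempty_iff_eq_empty] using hmeet

lemma centered_traceFamily (hP : P.Infinite)
    (hA : ∀ a ∈ A, {i ∈ P | (C i : Set ℕ) ∩ a = ∅}.Finite ∨
      {i ∈ P | ((C i : Set ℕ) ∩ a).Nonempty}.Finite) :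
    Centered (traceFamily A C P) := fun _ hF _ =>
  Infinite.mono ((Set.sdiff_sdiff_right_self _ _).trans_subset inter_subset_right)
    (hP.sdiff (diff_sInter_finite_of_subset_traceFamily hA hF))

end TraceFamily

theorem stmt12_general (e : ℕ → Set ℕ) (C : ℕ → Finset ℕ)
    (I : ℕ → Set ℕ) (hI0 : I 0 = Set.univ)
    (hIrec : ∀ n,
      ({i ∈ I n | ((C i : Set ℕ) ∩ e n).Nonempty}.Infinite ∧
        I (n + 1) = {i ∈ I n | ((C i : Set ℕ) ∩ e n).Nonempty}) ∨
      (¬ {i ∈ I n | ((C i : Set ℕ) ∩ e n).Nonempty}.Infinite ∧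
        I (n + 1) = {i ∈ I n | (C i : Set ℕ) ∩ e n = ∅})) :
    (Pseudo I).Infinite ∧
    (∀ n, {i ∈ Pseudo I | (C i : Set ℕ) ∩ e n = ∅}.Finite ∨
          {i ∈ Pseudo I | ((C i : Set ℕ) ∩ e n).Nonempty}.Finite) ∧
    Centered (traceFamily (Set.range e) C (Pseudo I)) ∧
    (∀ F : Finset (Set ℕ), ↑F ⊆ traceFamily (Set.range e) C (Pseudo I) →
      (Pseudo I \ ⋂₀ (F : Set (Set ℕ))).Finite) := by
  have hseq : IsSplitSequence C e I := hIrec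
  have hinf := hseq.infinite (hI0 ▸ infinite_univ)
  have hcentered : ∀ n, (⋂ k ∈ Iic n, I k).Infinite := fun n =>
    (hinf n).mono (subset_iInter₂ fun _ hk => hseq.antitone hk)
  have hdich : ∀ n, {i ∈ Pseudo I | (C i : Set ℕ) ∩ e n = ∅}.Finite ∨
      {i ∈ Pseudo I | ((C i : Set ℕ) ∩ e n).Nonempty}.Finite := fun n =>
    hseq.dichotomy (pseudo_diff_finite hcentered (n + 1))
  have hdichA : ∀ a ∈ range e, {i ∈ Pseudo I | (C i : Set ℕ) ∩ a = ∅}.Finite ∨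
      {i ∈ Pseudo I | ((C i : Set ℕ) ∩ a).Nonempty}.Finite := forall_mem_range.2 hdich
  exact ⟨pseudo_infinite hcentered, hdich, centered_traceFamily (pseudo_infinite hcentered) hdichA,
    fun _ hF => diff_sInter_finite_of_subset_traceFamily hdichA hF⟩

theorem stmt12 (e : ℕ → Set ℕ) (he : Function.Injective e)
    (hA : ADFamily (Set.range e)) (C : ℕ → Finset ℕ) (hC : FinSeq C)
    (I : ℕ → Set ℕ) (hI0 : I 0 = Set.univ)
    (hIrec : ∀ n,
      ({i ∈ I n | ((C i : Set ℕ) ∩ e n).Nonempty}.Infinite ∧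
        I (n + 1) = {i ∈ I n | ((C i : Set ℕ) ∩ e n).Nonempty}) ∨
      (¬ {i ∈ I n | ((C i : Set ℕ) ∩ e n).Nonempty}.Infinite ∧
        I (n + 1) = {i ∈ I n | (C i : Set ℕ) ∩ e n = ∅})) :
    (Pseudo I).Infinite ∧
    (∀ n, {i ∈ Pseudo I | (C i : Set ℕ) ∩ e n = ∅}.Finite ∨
          {i ∈ Pseudo I | ((C i : Set ℕ) ∩ e n).Nonempty}.Finite) ∧
    Centered (traceFamily (Set.range e) C (Pseudo I)) ∧
    (∀ F : Finset (Set ℕ), ↑F ⊆ traceFamily (Set.range e) C (Pseudo I) →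
      (Pseudo I \ ⋂₀ (F : Set (Set ℕ))).Finite) :=
  stmt12_general e C I hI0 hIrec
end

section
/- Let $\mathcal{A}$ be an almost disjoint family and $(Y_n:n\in\omega)$ a $\subseteq$-decreasing sequence of subsets of $\omega$ with each $Y_n\in\mathcal{I}^+(\mathcal{A})$. Then there exists $Y\in\mathcal{I}^+(\mathcal{A})$ which is a pseudointersection of the sequence, i.e., $Y\subseteq^* Y_n$ for all $n$. -/
open Set

/-!
Let `A'` be the members of `A` meeting every `Y n` in an infinite set.

If `A'` is infinite, pick distinct `a₀, a₁, … ∈ A'` and infinite `W k ⊆ a k ∩ Y k` with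
`W k ⊆* Y n` for all `n`. Then `⋃ k, W k` is a pseudointersection of the `Y n`, and it meets
infinitely many members of `A` in an infinite set, which by almost disjointness no finite
subfamily of `A` can absorb.

If `A'` is finite, the sets `Y n \ ⋃ A'` are still infinite since `Y n ∈ I⁺(A)`, and any infinite
pseudointersection of them is almost disjoint from every member of `A`, hence in `I⁺(A)`.
-/

lemma exists_strictMono_forall_mem {S : ℕ → Set ℕ} (hS : ∀ j, (S j).Infinite) :
    ∃ f : ℕ → ℕ, StrictMono f ∧ ∀ j, f j ∈ S j := by
  choose g hg hglt using fun (j m : ℕ) => (hS j).exists_gt m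
  refine ⟨fun j => Nat.rec (g 0 0) (fun j fj => g (j + 1) fj) j, ?_, ?_⟩
  · exact strictMono_nat_of_lt_succ fun n => hglt (n + 1) _
  · rintro (_ | j)
    · exact hg 0 0
    · exact hg (j + 1) _

lemma range_diff_finite_of_forall_mem {α : Type*} {Y : ℕ → Set α} (hY : Antitone Y)
    {f : ℕ → α} (hf : ∀ j, f j ∈ Y j) (n : ℕ) : (range f \ Y n).Finite := by
  refine ((finite_Iio n).image f).subset ?_
  rintro _ ⟨⟨j, rfl⟩, hj⟩
  exact ⟨j, lt_of_not_ge fun h => hj (hY h (hf j)), rfl⟩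

lemma exists_infinite_pseudointersection {Y : ℕ → Set ℕ} (hY : Antitone Y)
    (hinf : ∀ n, (Y n).Infinite) : ∃ Z ⊆ Y 0, Z.Infinite ∧ ∀ n, (Z \ Y n).Finite := by
  obtain ⟨f, hf, hfY⟩ := exists_strictMono_forall_mem hinf
  exact ⟨range f, range_subset_iff.2 fun j => hY (Nat.zero_le j) (hfY j),
    infinite_range_of_injective hf.injective, range_diff_finite_of_forall_mem hY hfY⟩

lemma iUnion_diff_finite_of_subset {α : Type*} {Y W : ℕ → Set α} (hY : Antitone Y)
    (hWY : ∀ k, W k ⊆ Y k) (hW : ∀ k n, (W k \ Y n).Finite) (n : ℕ) :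
    ((⋃ k, W k) \ Y n).Finite := by
  refine ((finite_Iio n).biUnion fun k _ => hW k n).subset ?_
  rintro x ⟨hx, hxn⟩
  obtain ⟨k, hxk⟩ := mem_iUnion.1 hx
  exact mem_biUnion (lt_of_not_ge fun h => hxn (hY h (hWY k hxk))) ⟨hxk, hxn⟩

lemma Set.Infinite.diff_sUnion_of_inter_finite {α : Type*} {Z : Set α} (hZ : Z.Infinite)
    {B : Set (Set α)} (hB : B.Finite) (h : ∀ b ∈ B, (Z ∩ b).Finite) : (Z \ ⋃₀ B).Infinite := by
  refine (hZ.sdiff (hB.biUnion h)).mono ?_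
  rintro x ⟨hxZ, hx⟩
  exact ⟨hxZ, fun ⟨b, hb, hxb⟩ => hx (mem_biUnion hb ⟨hxZ, hxb⟩)⟩

lemma IPlus.infinite {A : Set (Set ℕ)} {X : Set ℕ} (hX : IPlus A X) : X.Infinite := by
  simpa using hX ∅ (by simp)

lemma IPlus.diff_sUnion {A : Set (Set ℕ)} {X : Set ℕ} (hX : IPlus A X) {F : Finset (Set ℕ)}
    (hF : ↑F ⊆ A) : IPlus A (X \ ⋃₀ ↑F) := by
  intro B hB
  simpa only [sdiff_sdiff, ← sUnion_union, ← Finset.coe_union] using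
    hX (F ∪ B) (by simpa only [Finset.coe_union] using union_subset hF hB)

lemma iPlus_of_inter_finite {A : Set (Set ℕ)} {Z : Set ℕ} (hZ : Z.Infinite)
    (h : ∀ a ∈ A, (Z ∩ a).Finite) : IPlus A Z :=
  fun B hB => hZ.diff_sUnion_of_inter_finite B.finite_toSet fun b hb => h b (hB hb)

lemma iPlus_of_infinite_inter {A : Set (Set ℕ)} (hA : A.Pairwise fun a b => (a ∩ b).Finite)
    {Z : Set ℕ} (hZ : {a ∈ A | (Z ∩ a).Infinite}.Infinite) : IPlus A Z := by
  intro B hB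
  obtain ⟨a, ⟨haA, hZa⟩, haB⟩ := (hZ.sdiff B.finite_toSet).nonempty
  refine (hZa.diff_sUnion_of_inter_finite B.finite_toSet fun b hb => ?_).mono
    (sdiff_subset_sdiff_left inter_subset_left)
  exact (hA haA (hB hb) fun hab => haB (hab ▸ hb)).subset
    (inter_subset_inter_left _ inter_subset_right)

lemma exists_iPlus_pseudointersection_of_infinite {A : Set (Set ℕ)}
    (hA : A.Pairwise fun a b => (a ∩ b).Finite) {Y : ℕ → Set ℕ} (hY : Antitone Y)
    (hA' : {a ∈ A | ∀ n, (a ∩ Y n).Infinite}.Infinite) :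
    ∃ Z, IPlus A Z ∧ ∀ n, (Z \ Y n).Finite := by
  set a : ℕ → Set ℕ := fun k => hA'.natEmbedding _ k
  have ha_inj : a.Injective := Subtype.val_injective.comp (hA'.natEmbedding _).injective
  have ha : ∀ k, a k ∈ A ∧ ∀ n, (a k ∩ Y n).Infinite := fun k => (hA'.natEmbedding _ k).2
  choose W hWa hWinf hWY using fun k =>
    exists_infinite_pseudointersection (Y := fun n => a k ∩ Y (k + n))
      (fun m n h => inter_subset_inter_right _ (hY (Nat.add_le_add_left h k))) fun n => (ha k).2 _
  have hWY' : ∀ k n, (W k \ Y n).Finite := fun k n =>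
    (hWY k n).subset <|
      sdiff_subset_sdiff_right (inter_subset_right.trans (hY (Nat.le_add_left n k)))
  refine ⟨⋃ k, W k, iPlus_of_infinite_inter hA ?_,
    iUnion_diff_finite_of_subset hY (fun k => (hWa k).trans inter_subset_right) hWY'⟩
  refine (infinite_range_of_injective ha_inj).mono ?_
  rintro _ ⟨k, rfl⟩
  exact ⟨(ha k).1,
    (hWinf k).mono (subset_inter (subset_iUnion W k) ((hWa k).trans inter_subset_left))⟩

lemma exists_iPlus_pseudointersection_of_finite {A : Set (Set ℕ)} {Y : ℕ → Set ℕ}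
    (hY : Antitone Y) (hplus : ∀ n, IPlus A (Y n))
    (hA' : {a ∈ A | ∀ n, (a ∩ Y n).Infinite}.Finite) :
    ∃ Z, IPlus A Z ∧ ∀ n, (Z \ Y n).Finite := by
  set F := hA'.toFinset
  have hF : ↑F ⊆ A := fun a ha => ((hA'.mem_toFinset).1 ha).1
  obtain ⟨Z, hZ0, hZinf, hZY⟩ := exists_infinite_pseudointersection (Y := fun n => Y n \ ⋃₀ ↑F)
    (fun m n h => sdiff_subset_sdiff_left (hY h)) fun n => ((hplus n).diff_sUnion hF).infinite
  refine ⟨Z, iPlus_of_inter_finite hZinf fun a ha => ?_,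
    fun n => (hZY n).subset (sdiff_subset_sdiff_right sdiff_subset)⟩
  by_cases haF : ∀ n, (a ∩ Y n).Infinite
  · refine finite_empty.subset ?_
    rintro x ⟨hxZ, hxa⟩
    exact (hZ0 hxZ).2 ⟨a, hA'.mem_toFinset.2 ⟨ha, haF⟩, hxa⟩
  · obtain ⟨n, hn⟩ : ∃ n, (a ∩ Y n).Finite := by simpa using haF
    refine ((hZY n).union hn).subset ?_
    rintro x ⟨hxZ, hxa⟩
    by_cases hx : x ∈ Y n \ ⋃₀ ↑F
    · exact Or.inr ⟨hxa, hx.1⟩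
    · exact Or.inl ⟨hxZ, hx⟩

theorem stmt15 (A : Set (Set ℕ)) (hA : ADFamily A) (Y : ℕ → Set ℕ)
    (hdec : ∀ n, Y (n + 1) ⊆ Y n) (hplus : ∀ n, IPlus A (Y n)) :
    ∃ Z : Set ℕ, IPlus A Z ∧ ∀ n, (Z \ Y n).Finite := by
  have hY : Antitone Y := antitone_nat_of_succ_le hdec
  rcases {a ∈ A | ∀ n, (a ∩ Y n).Infinite}.finite_or_infinite with hfin | hinf
  · exact exists_iPlus_pseudointersection_of_finite hY hplus hfin
  · exact exists_iPlus_pseudointersection_of_infinite hA.2.2 hY hinf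
end
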